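/- For the ansatz Î, for every pair of distinct indices i ≠ j one has ∫_{S²} (Ω·R_i)(Ω·R_j) Î(Ω) dΩ = 0; consequently, writing E² = ∫_{S²} Ω Ωᵀ Î(Ω) dΩ, the matrix Rᵀ E² R is diagonal, where R = [R₁, R₂, R₃], so each R_j is an eigenvector of E². -/

import Mathlib

/-!
Reflection in the plane orthogonal to `R m` negates `Ω·R_m`, fixes `Ω·R_l` for `l ≠ m`, and
preserves the sphere measure. For `i ≠ j`, choosing `m ∈ {i, j}` different from `k` makes the
summand `(Ω·R_i)(Ω·R_j) f_k(Ω·R_k)` odd, so it integrates to zero.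

Splitting the integral into these summands requires `f_k(Ω·u)` to be integrable on the sphere.
This is Archimedes' theorem that `Ω·u` is uniformly distributed on `[-1, 1]`. Since the sphere
measure is the cone measure of the unit ball, it reduces to the fact that in the coordinates
`(h, s) = (x·u, ‖x‖²)` Lebesgue measure on ℝ³ becomes `π` times Lebesgue measure on `{h² ≤ s}`:
there the cone over `{Ω·u ∈ B}` has slices `√s • (B ∩ [-1, 1])` for `0 < s < 1`.
-/

open MeasureTheory Metric
open scoped InnerProductSpace Real

noncomputable section

abbrev E3 := EuclideanSpace ℝ (Fin 3)

/-- The surface measure on the unit sphere S² ⊆ ℝ³. -/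
def sphereMeasure : Measure (sphere (0 : E3) 1) :=
  (volume : Measure E3).toSphere

open Set
open scoped ENNReal Pointwise Matrix

theorem MeasureTheory.Measure.ext_of_Iic_of_ne_top (μ ν : Measure ℝ) (hμ : ∀ c, μ (Iic c) ≠ ∞)
    (h : ∀ c, μ (Iic c) = ν (Iic c)) : μ = ν := by
  refine μ.ext_of_Ioc' ν
    (fun a b _ => ne_top_of_le_ne_top (hμ b) (measure_mono Ioc_subset_Iic_self)) fun a b hab => ?_
  have hsub : Iic a ⊆ Iic b := Iic_subset_Iic.2 hab.le
  rw [← Iic_sdiff_Iic, measure_sdiff hsub measurableSet_Iic.nullMeasurableSet (hμ a),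
    measure_sdiff hsub measurableSet_Iic.nullMeasurableSet (h a ▸ hμ a), h, h]

theorem volume_norm_sq_le_fin_two (c : ℝ) :
    volume {v : EuclideanSpace ℝ (Fin 2) | ‖v‖ ^ 2 ≤ c} = ENNReal.ofReal (π * c) := by
  rcases lt_or_ge c 0 with hc | hc
  · have hempty : {v : EuclideanSpace ℝ (Fin 2) | ‖v‖ ^ 2 ≤ c} = ∅ :=
      eq_empty_of_forall_notMem fun v hv => (hc.trans_le (sq_nonneg ‖v‖)).not_ge hv
    rw [hempty, measure_empty,
      ENNReal.ofReal_of_nonpos (mul_nonpos_of_nonneg_of_nonpos Real.pi_pos.le hc.le)]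
  · have hball : {v : EuclideanSpace ℝ (Fin 2) | ‖v‖ ^ 2 ≤ c} = closedBall 0 (√c) := by
      ext v
      rw [mem_ofPred_eq, mem_closedBall_zero_iff, Real.le_sqrt (norm_nonneg v) hc]
    rw [hball, EuclideanSpace.volume_closedBall_fin_two, ← ENNReal.ofReal_pow (Real.sqrt_nonneg c),
      Real.sq_sqrt hc, ← ENNReal.ofReal_mul hc, mul_comm]

theorem map_norm_sq_volume_fin_two :
    volume.map (fun v : EuclideanSpace ℝ (Fin 2) => ‖v‖ ^ 2) =
      ENNReal.ofReal π • volume.restrict (Ici 0) := by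
  have hmeas : Measurable (fun v : EuclideanSpace ℝ (Fin 2) => ‖v‖ ^ 2) := by fun_prop
  refine Measure.ext_of_Iic_of_ne_top _ _ (fun c => ?_) fun c => ?_ <;>
    rw [Measure.map_apply hmeas measurableSet_Iic]
  · exact (volume_norm_sq_le_fin_two c).trans_ne ENNReal.ofReal_ne_top
  · rw [Measure.smul_apply, Measure.restrict_apply measurableSet_Iic, Iic_inter_Ici,
      Real.volume_Icc, smul_eq_mul, ← ENNReal.ofReal_mul Real.pi_pos.le, sub_zero]
    exact volume_norm_sq_le_fin_two c

theorem map_fst_sq_add_norm_sq_volume :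
    volume.map (fun p : ℝ × EuclideanSpace ℝ (Fin 2) => (p.1, p.1 ^ 2 + ‖p.2‖ ^ 2)) =
      ENNReal.ofReal π • volume.restrict {q : ℝ × ℝ | q.1 ^ 2 ≤ q.2} := by
  have hD : MeasurableSet {q : ℝ × ℝ | q.1 ^ 2 ≤ q.2} :=
    measurableSet_le (by fun_prop) (by fun_prop)
  have hmeas : Measurable
      (fun p : ℝ × EuclideanSpace ℝ (Fin 2) => (p.1, p.1 ^ 2 + ‖p.2‖ ^ 2)) := by
    fun_prop
  ext W hW
  rw [Measure.map_apply hmeas hW, Measure.smul_apply, Measure.restrict_apply hW, smul_eq_mul,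
    Measure.volume_eq_prod, Measure.volume_eq_prod, Measure.prod_apply (hmeas hW),
    Measure.prod_apply (hW.inter hD),
    ← lintegral_const_mul _ (measurable_measure_prodMk_left (hW.inter hD))]
  refine lintegral_congr fun h => ?_
  have hslice : MeasurableSet {q : ℝ | (h, h ^ 2 + q) ∈ W} :=
    measurable_prodMk_left.comp (by fun_prop) hW
  calc volume {v : EuclideanSpace ℝ (Fin 2) | (h, h ^ 2 + ‖v‖ ^ 2) ∈ W}
      = volume.map (fun v : EuclideanSpace ℝ (Fin 2) => ‖v‖ ^ 2) {q | (h, h ^ 2 + q) ∈ W} :=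
        (Measure.map_apply (by fun_prop) hslice).symm
    _ = ENNReal.ofReal π * volume ({q | (h, h ^ 2 + q) ∈ W} ∩ Ici 0) := by
        rw [map_norm_sq_volume_fin_two, Measure.smul_apply, Measure.restrict_apply hslice,
          smul_eq_mul]
    _ = ENNReal.ofReal π * volume {s | (h, s) ∈ W ∩ {q | q.1 ^ 2 ≤ q.2}} := by
        rw [← measure_preimage_add volume (h ^ 2) {s | (h, s) ∈ W ∩ {q | q.1 ^ 2 ≤ q.2}}]
        congr 2
        ext q
        simp

/-- `(h, v) ↦ (h, v₀, v₁)`. -/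
def consEuclidean : ℝ × EuclideanSpace ℝ (Fin 2) ≃ᵐ E3 :=
  ((MeasurableEquiv.refl ℝ).prodCongr (MeasurableEquiv.toLp 2 (Fin 2 → ℝ)).symm).trans
    ((MeasurableEquiv.piFinSuccAbove (fun _ => ℝ) 0).symm.trans
      (MeasurableEquiv.toLp 2 (Fin 3 → ℝ)))

theorem measurePreserving_consEuclidean : MeasurePreserving consEuclidean := by
  refine ((MeasurePreserving.id volume).prod
    (EuclideanSpace.volume_preserving_symm_measurableEquiv_toLp (Fin 2))).trans ?_
  exact ((volume_preserving_piFinSuccAbove (fun _ => ℝ) 0).symm _).trans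
    (PiLp.volume_preserving_toLp _)

theorem consEuclidean_apply_zero (p : ℝ × EuclideanSpace ℝ (Fin 2)) : consEuclidean p 0 = p.1 := rfl

theorem norm_consEuclidean_sq (p : ℝ × EuclideanSpace ℝ (Fin 2)) :
    ‖consEuclidean p‖ ^ 2 = p.1 ^ 2 + ‖p.2‖ ^ 2 := by
  rw [EuclideanSpace.norm_sq_eq, EuclideanSpace.norm_sq_eq, Fin.sum_univ_succ, Real.norm_eq_abs,
    sq_abs]
  rfl

theorem map_inner_norm_sq_volume {u : E3} (hu : ‖u‖ = 1) :
    volume.map (fun x : E3 => (⟪x, u⟫_ℝ, ‖x‖ ^ 2)) =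
      ENNReal.ofReal π • volume.restrict {q : ℝ × ℝ | q.1 ^ 2 ≤ q.2} := by
  obtain ⟨b, hb⟩ : ∃ b : OrthonormalBasis (Fin 3) ℝ E3, ∀ i ∈ ({0} : Set (Fin 3)), b i = u :=
    Orthonormal.exists_orthonormalBasis_extension_of_card_eq (by simp)
      ⟨fun _ => hu, Subsingleton.pairwise⟩
  have hfactor : (fun x : E3 => (⟪x, u⟫_ℝ, ‖x‖ ^ 2)) =
      (fun p : ℝ × EuclideanSpace ℝ (Fin 2) => (p.1, p.1 ^ 2 + ‖p.2‖ ^ 2)) ∘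
        consEuclidean.symm ∘ b.repr := by
    ext x
    · simp [← consEuclidean_apply_zero, b.repr_apply_apply, ← hb 0 rfl, real_inner_comm]
    · simp [← norm_consEuclidean_sq]
  rw [hfactor, ← Measure.map_map (by fun_prop) (by fun_prop),
    ← Measure.map_map (by fun_prop) (by fun_prop), b.repr.measurePreserving.map_eq,
    measurePreserving_consEuclidean.symm.map_eq, map_fst_sq_add_norm_sq_volume]

/-- The image of the cone `{r • Ω | 0 < r < 1, Ω·u ∈ B}` under `x ↦ (x·u, ‖x‖²)`. -/
def coneCoords (B : Set ℝ) : Set (ℝ × ℝ) :=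
  {q | 0 < q.2 ∧ q.2 < 1 ∧ q.1 / √q.2 ∈ B}

theorem measurableSet_coneCoords {B : Set ℝ} (hB : MeasurableSet B) :
    MeasurableSet (coneCoords B) :=
  (measurableSet_lt measurable_const measurable_snd).inter
    ((measurableSet_lt measurable_snd measurable_const).inter (hB.preimage (by fun_prop)))

theorem Ioo_smul_coe_preimage_inner_eq {E : Type*} [NormedAddCommGroup E] [InnerProductSpace ℝ E]
    (u : E) (B : Set ℝ) :
    Ioo (0 : ℝ) 1 • ((↑) '' ((fun Ω : sphere (0 : E) 1 => ⟪(Ω : E), u⟫_ℝ) ⁻¹' B) : Set E) =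
      (fun x : E => (⟪x, u⟫_ℝ, ‖x‖ ^ 2)) ⁻¹' coneCoords B := by
  ext x
  constructor
  · rintro ⟨r, ⟨hr0, hr1⟩, _, ⟨Ω, hΩ, rfl⟩, rfl⟩
    have hnorm : ‖r • (Ω : E)‖ = r := by
      rw [norm_smul, norm_eq_of_mem_sphere Ω, mul_one, Real.norm_of_nonneg hr0.le]
    refine ⟨by simp [hnorm, hr0], by simp only [hnorm]; nlinarith, ?_⟩
    simpa only [mem_preimage, hnorm, Real.sqrt_sq hr0.le, real_inner_smul_left,
      mul_div_cancel_left₀ _ hr0.ne'] using hΩ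
  · rintro ⟨h0, h1, hB⟩
    simp only at h0 h1 hB
    have hr0 : 0 < ‖x‖ := by nlinarith [norm_nonneg x]
    have hr1 : ‖x‖ < 1 := by nlinarith
    have hΩ : ‖x‖⁻¹ • x ∈ sphere (0 : E) 1 := by
      rw [mem_sphere_zero_iff_norm, norm_smul, norm_inv, norm_norm, inv_mul_cancel₀ hr0.ne']
    refine ⟨‖x‖, ⟨hr0, hr1⟩, _, ⟨⟨_, hΩ⟩, ?_, rfl⟩, smul_inv_smul₀ hr0.ne' x⟩
    simpa [Real.sqrt_sq hr0.le, real_inner_smul_left, div_eq_inv_mul] using hB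

theorem lintegral_ofReal_sqrt_Ioo_zero_one :
    ∫⁻ s in Ioo (0 : ℝ) 1, ENNReal.ofReal √s = ENNReal.ofReal (2 / 3) := by
  rw [← ofReal_integral_eq_lintegral_ofReal
      (Real.continuous_sqrt.integrableOn_Icc.mono_set Ioo_subset_Icc_self)
      (ae_of_all _ fun s => Real.sqrt_nonneg s),
    ← integral_Ioc_eq_integral_Ioo, ← intervalIntegral.integral_of_le zero_le_one]
  simp_rw [Real.sqrt_eq_rpow]
  rw [integral_rpow (by norm_num)]
  norm_num

theorem volume_coneCoords_slice (B : Set ℝ) (s : ℝ) :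
    volume ((fun h => (h, s)) ⁻¹' (coneCoords B ∩ {q | q.1 ^ 2 ≤ q.2})) =
      (Ioo 0 1).indicator (fun s => ENNReal.ofReal √s) s * volume (B ∩ Icc (-1) 1) := by
  by_cases hs : s ∈ Ioo 0 1
  · have hsqrt : 0 < √s := Real.sqrt_pos.2 hs.1
    have hpre : (fun h => (h, s)) ⁻¹' (coneCoords B ∩ {q | q.1 ^ 2 ≤ q.2}) =
        (fun h => (√s)⁻¹ * h) ⁻¹' (B ∩ Icc (-1) 1) := by
      ext h
      have hsq : h ^ 2 ≤ s ↔ (√s)⁻¹ * h ∈ Icc (-1) 1 := by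
        rw [mem_Icc, ← abs_le, ← sq_le_one_iff_abs_le_one, mul_pow, inv_pow,
          Real.sq_sqrt hs.1.le, inv_mul_le_one₀ hs.1]
      simp only [coneCoords, mem_preimage, mem_inter_iff, mem_ofPred_eq, hs.1, hs.2, true_and, hsq,
        div_eq_inv_mul]
    rw [hpre, Real.volume_preimage_mul_left (inv_ne_zero hsqrt.ne'), inv_inv, abs_of_pos hsqrt,
      indicator_of_mem hs]
  · have hpre : (fun h => (h, s)) ⁻¹' (coneCoords B ∩ {q | q.1 ^ 2 ≤ q.2}) = ∅ :=
      eq_empty_of_forall_notMem fun h hh => hs ⟨hh.1.1, hh.1.2.1⟩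
    rw [hpre, measure_empty, indicator_of_notMem hs, zero_mul]

theorem volume_coneCoords_inter (B : Set ℝ) (hB : MeasurableSet B) :
    volume (coneCoords B ∩ {q | q.1 ^ 2 ≤ q.2}) =
      ENNReal.ofReal (2 / 3) * volume (B ∩ Icc (-1) 1) := by
  have hmeas : MeasurableSet (coneCoords B ∩ {q | q.1 ^ 2 ≤ q.2}) :=
    (measurableSet_coneCoords hB).inter (measurableSet_le (by fun_prop) (by fun_prop))
  rw [Measure.volume_eq_prod, Measure.prod_apply_symm hmeas]
  simp_rw [volume_coneCoords_slice]
  rw [lintegral_mul_const _ ((Measurable.ennreal_ofReal (by fun_prop)).indicator measurableSet_Ioo),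
    lintegral_indicator measurableSet_Ioo, lintegral_ofReal_sqrt_Ioo_zero_one]

/-- Archimedes' hat-box theorem. -/
theorem map_inner_sphereMeasure {u : E3} (hu : ‖u‖ = 1) :
    sphereMeasure.map (fun Ω : sphere (0 : E3) 1 => ⟪(Ω : E3), u⟫_ℝ) =
      ENNReal.ofReal (2 * π) • volume.restrict (Icc (-1) 1) := by
  have hφ : Measurable (fun Ω : sphere (0 : E3) 1 => ⟪(Ω : E3), u⟫_ℝ) := by fun_prop
  ext B hB
  have hW := measurableSet_coneCoords hB
  rw [Measure.map_apply hφ hB, sphereMeasure, Measure.toSphere_apply' _ (hφ hB),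
    Ioo_smul_coe_preimage_inner_eq, ← Measure.map_apply (by fun_prop) hW,
    map_inner_norm_sq_volume hu, Measure.smul_apply, Measure.restrict_apply hW,
    volume_coneCoords_inter B hB, Measure.smul_apply, Measure.restrict_apply hB, smul_eq_mul,
    smul_eq_mul, finrank_euclideanSpace_fin,
    ← mul_assoc, ← mul_assoc]
  congr 1
  rw [show ((3 : ℕ) : ℝ≥0∞) = ENNReal.ofReal 3 by simp, ← ENNReal.ofReal_mul (by norm_num),
    ← ENNReal.ofReal_mul (by positivity)]
  ring_nf

section SphereIsometry

variable {E : Type*} [NormedAddCommGroup E] [NormedSpace ℝ E]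

def LinearIsometryEquiv.sphereHomeomorph (T : E ≃ₗᵢ[ℝ] E) :
    sphere (0 : E) 1 ≃ₜ sphere (0 : E) 1 :=
  T.toHomeomorph.subtype fun x => by simp [T.norm_map]

@[simp]
theorem LinearIsometryEquiv.coe_sphereHomeomorph (T : E ≃ₗᵢ[ℝ] E) (Ω : sphere (0 : E) 1) :
    (T.sphereHomeomorph Ω : E) = T Ω := rfl

theorem LinearIsometryEquiv.measurePreserving_sphereHomeomorph [MeasurableSpace E] [BorelSpace E]
    {μ : Measure E} (T : E ≃ₗᵢ[ℝ] E) (hT : MeasurePreserving T μ μ) :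
    MeasurePreserving T.sphereHomeomorph μ.toSphere μ.toSphere := by
  refine ⟨T.sphereHomeomorph.measurable, Measure.ext fun A hA => ?_⟩
  have hcone : Ioo (0 : ℝ) 1 • ((↑) '' (T.sphereHomeomorph ⁻¹' A) : Set E) =
      T ⁻¹' (Ioo (0 : ℝ) 1 • ((↑) '' A)) := by
    ext x
    simp only [mem_preimage, mem_smul, mem_image]
    constructor
    · rintro ⟨r, hr, _, ⟨Ω, hΩ, rfl⟩, rfl⟩
      exact ⟨r, hr, _, ⟨_, hΩ, rfl⟩, by simp⟩
    · rintro ⟨r, hr, _, ⟨Ω, hΩ, rfl⟩, hx⟩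
      refine ⟨r, hr, _, ⟨T.sphereHomeomorph.symm Ω, by simpa using hΩ, rfl⟩, T.injective ?_⟩
      rw [← hx, map_smul]
      congr 1
      exact congrArg Subtype.val (T.sphereHomeomorph.apply_symm_apply Ω)
  rw [Measure.map_apply T.sphereHomeomorph.measurable hA,
    Measure.toSphere_apply' _ (T.sphereHomeomorph.measurable hA), Measure.toSphere_apply' _ hA,
    hcone, hT.measure_preimage_emb T.toHomeomorph.measurableEmbedding]

end SphereIsometry

theorem MeasureTheory.MeasurePreserving.integral_eq_zero_of_comp_eq_neg {α : Type*}
    [MeasurableSpace α] {μ : Measure α} {f : α → α} (hf : MeasurePreserving f μ μ)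
    (hfe : MeasurableEmbedding f) {G : α → ℝ} (hG : ∀ x, G (f x) = -G x) :
    ∫ x, G x ∂μ = 0 := by
  have h := hf.integral_comp hfe G
  simp only [hG, integral_neg] at h
  linarith

section Reflection

variable {E : Type*} [NormedAddCommGroup E] [InnerProductSpace ℝ E] {ι : Type*} {R : ι → E}

theorem Orthonormal.inner_reflection_orthogonal_singleton [DecidableEq ι] (hR : Orthonormal ℝ R)
    (m l : ι) (x : E) :
    ⟪(ℝ ∙ R m)ᗮ.reflection x, R l⟫_ℝ = if l = m then -⟪x, R l⟫_ℝ else ⟪x, R l⟫_ℝ := by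
  rw [← (ℝ ∙ R m)ᗮ.reflection.inner_map_map, Submodule.reflection_reflection]
  split_ifs with hlm
  · rw [hlm, Submodule.reflection_orthogonalComplement_singleton_eq_neg, inner_neg_right]
  · rw [Submodule.reflection_mem_subspace_eq_self
      (Submodule.mem_orthogonal_singleton_iff_inner_right.2 (hR.2 (Ne.symm hlm)))]

theorem Orthonormal.integral_inner_mul_inner_mul_comp_inner_toSphere_eq_zero
    [FiniteDimensional ℝ E] [MeasurableSpace E] [BorelSpace E] (hR : Orthonormal ℝ R)
    {i j : ι} (hij : i ≠ j) (k : ι) (g : ℝ → ℝ) :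
    ∫ Ω, ⟪(Ω : E), R i⟫_ℝ * ⟪(Ω : E), R j⟫_ℝ * g ⟪(Ω : E), R k⟫_ℝ ∂(volume : Measure E).toSphere
      = 0 := by
  classical
  suffices h : ∀ m, m ≠ k → (i = m ↔ j ≠ m) → ∫ Ω, ⟪(Ω : E), R i⟫_ℝ * ⟪(Ω : E), R j⟫_ℝ *
      g ⟪(Ω : E), R k⟫_ℝ ∂(volume : Measure E).toSphere = 0 by
    by_cases hki : k = i
    · exact h j (hki ▸ Ne.symm hij) (by simp [hij])
    · exact h i (Ne.symm hki) (by simp [Ne.symm hij])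
  intro m hmk him
  let T := (ℝ ∙ R m)ᗮ.reflection
  refine (T.measurePreserving_sphereHomeomorph T.measurePreserving).integral_eq_zero_of_comp_eq_neg
    T.sphereHomeomorph.measurableEmbedding fun Ω => ?_
  simp only [T, LinearIsometryEquiv.coe_sphereHomeomorph, hR.inner_reflection_orthogonal_singleton,
    if_neg hmk.symm]
  by_cases hi : i = m
  · simp [hi, him.1 hi]
  · simp [hi, not_not.1 (mt him.2 hi)]

end Reflection

theorem MeasureTheory.Integrable.continuous_mul_of_compactSpace {X : Type*} [TopologicalSpace X]
    [CompactSpace X] [T2Space X] [MeasurableSpace X] [OpensMeasurableSpace X] {μ : Measure X}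
    {g g' : X → ℝ} (hg : Continuous g) (hg' : Integrable g' μ) :
    Integrable (fun x => g x * g' x) μ := by
  simpa using hg'.integrableOn.continuousOn_mul hg.continuousOn isCompact_univ

theorem integrable_comp_inner_sphereMeasure {u : E3} (hu : ‖u‖ = 1) {g : ℝ → ℝ}
    (hg : IntegrableOn g (Icc (-1) 1)) :
    Integrable (fun Ω : sphere (0 : E3) 1 => g ⟪(Ω : E3), u⟫_ℝ) sphereMeasure := by
  have hν : Integrable g (ENNReal.ofReal (2 * π) • volume.restrict (Icc (-1 : ℝ) 1)) :=
    hg.smul_measure ENNReal.ofReal_ne_top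
  rw [← map_inner_sphereMeasure hu] at hν
  exact hν.comp_measurable (by fun_prop)

theorem integral_inner_mul_inner_mul_eq_sum {ι X : Type*} [Fintype ι] [TopologicalSpace X]
    [CompactSpace X] [T2Space X] [MeasurableSpace X] [OpensMeasurableSpace X] {μ : Measure X}
    {x : X → EuclideanSpace ℝ ι} (hx : Continuous x) {I : X → ℝ} (hI : Integrable I μ)
    (u v : EuclideanSpace ℝ ι) :
    ∫ ω, ⟪x ω, u⟫_ℝ * ⟪x ω, v⟫_ℝ * I ω ∂μ =
      ∑ a, ∑ b, u a * (∫ ω, x ω a * x ω b * I ω ∂μ) * v b := by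
  have hint : ∀ a b, Integrable (fun ω => u a * (x ω a * x ω b * I ω) * v b) μ :=
    fun a b =>
      ((Integrable.continuous_mul_of_compactSpace (by fun_prop) hI).const_mul _).mul_const _
  calc ∫ ω, ⟪x ω, u⟫_ℝ * ⟪x ω, v⟫_ℝ * I ω ∂μ
      = ∫ ω, ∑ a, ∑ b, u a * (x ω a * x ω b * I ω) * v b ∂μ := by
        refine integral_congr_ae (ae_of_all _ fun ω => ?_)
        simp only [EuclideanSpace.inner_eq_star_dotProduct, dotProduct, star_trivial]
        rw [Finset.sum_mul_sum, Finset.sum_mul]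
        refine Finset.sum_congr rfl fun a _ => ?_
        rw [Finset.sum_mul]
        exact Finset.sum_congr rfl fun b _ => by ring
    _ = ∑ a, ∑ b, ∫ ω, u a * (x ω a * x ω b * I ω) * v b ∂μ := by
        rw [integral_finsetSum _ fun a _ => integrable_finsetSum _ fun b _ => hint a b]
        exact Finset.sum_congr rfl fun a _ => integral_finsetSum _ fun b _ => hint a b
    _ = _ := by simp_rw [integral_mul_const, integral_const_mul]

theorem Matrix.mulVec_col_eq_smul_of_transpose_mul_mul_offDiag_eq_zero {n R : Type*} [Fintype n]
    [DecidableEq n] [CommRing R] {M P : Matrix n n R} (hP : Pᵀ * P = 1)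
    (hdiag : ∀ i j, i ≠ j → (Pᵀ * M * P) i j = 0) (j : n) :
    M *ᵥ (fun a => P a j) = (Pᵀ * M * P) j j • fun a => P a j := by
  have hMP : M * P = P * (Pᵀ * M * P) := by
    rw [← Matrix.mul_assoc, ← Matrix.mul_assoc, mul_eq_one_comm.1 hP, Matrix.one_mul]
  funext a
  calc (M *ᵥ fun a => P a j) a = (M * P) a j := rfl
    _ = P a j * (Pᵀ * M * P) j j := by
      rw [hMP, Matrix.mul_apply, Finset.sum_eq_single j
        (fun i _ hij => by rw [hdiag i j hij, mul_zero]) (by simp)]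
    _ = _ := by rw [Pi.smul_apply, smul_eq_mul, mul_comm]

theorem ansatz_eigenvectors
    (R : Fin 3 → E3) (hR : Orthonormal ℝ R)
    (w : Fin 3 → ℝ) (f : Fin 3 → ℝ → ℝ)
    (hf_int : ∀ i, IntegrableOn (f i) (Set.Icc (-1 : ℝ) 1))
    (I : sphere (0 : E3) 1 → ℝ)
    (hI : ∀ Ω, I Ω = ∑ i : Fin 3, (1 / (2 * π)) * w i * f i ⟪(Ω : E3), R i⟫_ℝ)
    (E2 : Matrix (Fin 3) (Fin 3) ℝ)
    (hE2 : ∀ a b, E2 a b = ∫ Ω, (Ω : E3) a * (Ω : E3) b * I Ω ∂sphereMeasure)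
    (Rmat : Matrix (Fin 3) (Fin 3) ℝ)
    (hRmat : ∀ a j, Rmat a j = R j a) :
    (∀ i j, i ≠ j →
      (∫ Ω, ⟪(Ω : E3), R i⟫_ℝ * ⟪(Ω : E3), R j⟫_ℝ * I Ω ∂sphereMeasure) = 0) ∧
    (∀ i j, i ≠ j → (Rmat.transpose * E2 * Rmat) i j = 0) ∧
    (∀ j, ∃ lam : ℝ, E2.mulVec (fun a => R j a) = fun a => lam * R j a) := by
  have hterm : ∀ k, Integrable (fun Ω : sphere (0 : E3) 1 =>
      (1 / (2 * π)) * w k * f k ⟪(Ω : E3), R k⟫_ℝ) sphereMeasure := fun k =>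
    (integrable_comp_inner_sphereMeasure (hR.1 k) (hf_int k)).const_mul _
  have hIint : Integrable I sphereMeasure :=
    (integrable_finsetSum Finset.univ fun k _ => hterm k).congr (ae_of_all _ fun Ω => (hI Ω).symm)
  have hmixed : ∀ i j, i ≠ j →
      (∫ Ω, ⟪(Ω : E3), R i⟫_ℝ * ⟪(Ω : E3), R j⟫_ℝ * I Ω ∂sphereMeasure) = 0 := by
    intro i j hij
    simp_rw [hI, Finset.mul_sum]
    rw [integral_finsetSum _ fun k _ =>
      Integrable.continuous_mul_of_compactSpace (by fun_prop) (hterm k)]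
    exact Finset.sum_eq_zero fun k _ =>
      hR.integral_inner_mul_inner_mul_comp_inner_toSphere_eq_zero hij k
        fun μ => 1 / (2 * π) * w k * f k μ
  have hRR : Rmatᵀ * Rmat = 1 := by
    ext i j
    simp only [Matrix.mul_apply, Matrix.transpose_apply, hRmat, Matrix.one_apply]
    rw [← orthonormal_iff_ite.1 hR i j]
    simp [EuclideanSpace.inner_eq_star_dotProduct, dotProduct, mul_comm]
  have hoffdiag : ∀ i j, i ≠ j → (Rmatᵀ * E2 * Rmat) i j = 0 := by
    intro i j hij
    rw [← hmixed i j hij, integral_inner_mul_inner_mul_eq_sum continuous_subtype_val hIint]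
    simp only [Matrix.mul_apply, Matrix.transpose_apply, hRmat, hE2, Finset.sum_mul]
    exact Finset.sum_comm
  refine ⟨hmixed, hoffdiag, fun j => ⟨(Rmatᵀ * E2 * Rmat) j j, ?_⟩⟩
  simpa [← hRmat, funext_iff, mul_comm] using
    Matrix.mulVec_col_eq_smul_of_transpose_mul_mul_offDiag_eq_zero hRR hoffdiag j

end
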